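/- arXiv:math/0609466 — 3 statements merged into one kernel-verified Lean document; each statement's English description precedes it below -/
import Mathlib

section
/- Let q1, r1, q2, r2 be positive integers with q1 + q2 ≥ 3 and 2·rS < qS − 1. Then the point P2 = (q1+q2−3, 2rB−2rS+q1+q2−3) does NOT lie in the convex hull of the other seven points {P1, −P1, −P2, P3, −P3, P4, −P4}; in this case the dual Thurston polytope is a genuine octagon with P2 among its vertices. -/
/-!
`P2` is the unique maximiser, among the eight points, of the linear functional
`l (u, v) = (2 rS - qS + 1) u + 2 (qS - 1) v`. A point at which a linear functional is strictly
larger than on a set `T` lies outside the convex hull of `T` and is an exposed, hence extreme,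
point of the convex hull of `T` with that point added. The seven inequalities `l y < l P2`
reduce, via `q1 + q2 = qS + qB` and `r1 + r2 = rS + rB`, to polynomial inequalities in
`qS, qB, rS, rB`.
-/

open Set

section StrictSeparation

variable {𝕜 E : Type*} [Field 𝕜] [LinearOrder 𝕜] [IsStrictOrderedRing 𝕜] [TopologicalSpace 𝕜]
  [AddCommGroup E] [TopologicalSpace E] [Module 𝕜 E] {l : StrongDual 𝕜 E} {x : E} {T : Set E}

theorem lt_of_mem_convexHull_of_forall_lt {c : 𝕜} (h : ∀ y ∈ T, l y < c) {z : E}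
    (hz : z ∈ convexHull 𝕜 T) : l z < c :=
  convexHull_min h (convex_halfSpace_lt (l : E →ₗ[𝕜] 𝕜).isLinear c) hz

theorem notMem_convexHull_of_forall_lt (h : ∀ y ∈ T, l y < l x) : x ∉ convexHull 𝕜 T :=
  fun hx => (lt_of_mem_convexHull_of_forall_lt h hx).false

theorem mem_exposedPoints_convexHull_insert (hT : T.Nonempty) (h : ∀ y ∈ T, l y < l x) :
    x ∈ (convexHull 𝕜 (insert x T)).exposedPoints 𝕜 := by
  refine ⟨subset_convexHull 𝕜 _ (mem_insert x T), l, fun y hy => ?_⟩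
  rw [convexHull_insert hT, mem_convexJoin] at hy
  obtain ⟨w, hw, z, hz, a, b, -, hb, hab, rfl⟩ := hy
  rw [mem_singleton_iff.1 hw]
  have hlz := lt_of_mem_convexHull_of_forall_lt h hz
  have hgap : l x - l (a • x + b • z) = b * (l x - l z) := by
    simp only [map_add, map_smul, smul_eq_mul]
    linear_combination -l x * hab
  refine ⟨by nlinarith, fun hle => ?_⟩
  obtain rfl : b = 0 := by nlinarith
  obtain rfl : a = 1 := by linarith
  simp

end StrictSeparation

theorem p2_functional_value_bounds {qS qB rS rB : ℝ} (hq : qS ≤ qB) (hrS : 0 ≤ rS)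
    (hrB : 1 ≤ rB) (hrq : 2 * rS < qS - 1) :
    let V := (qS + qB - 3) * (qS - 1 + 2 * rS) + 4 * (qS - 1) * (rB - rS)
    (qS - 1) * (qS - 1 - 2 * rS) < V ∧ qS - 1 - 2 * rS < V ∧
      qS - 1 - 2 * rS + (qS - 1) * (4 * rB - 2) < V := by
  intro V
  have hqB : 0 ≤ (qB - qS) * (qS - 1 + 2 * rS) := mul_nonneg (by linarith) (by linarith)
  have hrB' : 0 ≤ (qS - 1) * (rB - 1) := mul_nonneg (by linarith) (by linarith)
  refine ⟨?_, ?_, ?_⟩ <;> nlinarith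

theorem thurston_polytope_P2_vertex_general (q1 r1 q2 r2 : ℕ)
    (hr1 : 0 < r1)
    (hrq : 2 * min (r1 : ℝ) (r2 : ℝ) < min (q1 : ℝ) (q2 : ℝ) - 1) :
    let qB : ℝ := max (q1 : ℝ) (q2 : ℝ)
    let qS : ℝ := min (q1 : ℝ) (q2 : ℝ)
    let rB : ℝ := max (r1 : ℝ) (r2 : ℝ)
    let rS : ℝ := min (r1 : ℝ) (r2 : ℝ)
    let P1 : ℝ × ℝ := (qB - qS - 1, 2 * r1 + 2 * r2 + qB - qS - 1)
    let P2 : ℝ × ℝ := ((q1 : ℝ) + q2 - 3, 2 * rB - 2 * rS + q1 + q2 - 3)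
    let P3 : ℝ × ℝ := ((q1 : ℝ) + q2 - 1, 2 * rB - 2 * rS + q1 + q2 - 3)
    let P4 : ℝ × ℝ := ((q1 : ℝ) + q2 - 1, -(2 * (r1 : ℝ)) - 2 * r2 + q1 + q2 - 1)
    P2 ∉ convexHull ℝ ({P1, -P1, -P2, P3, -P3, P4, -P4} : Set (ℝ × ℝ)) ∧
      P2 ∈ Set.extremePoints ℝ
        (convexHull ℝ ({P1, -P1, P2, -P2, P3, -P3, P4, -P4} : Set (ℝ × ℝ))) := by
  intro qB qS rB rS P1 P2 P3 P4
  have hq : (q1 : ℝ) + q2 = qS + qB := (min_add_max _ _).symm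
  have hr : (r1 : ℝ) + r2 = rS + rB := (min_add_max _ _).symm
  have hrS : 0 ≤ rS := le_min r1.cast_nonneg r2.cast_nonneg
  have hrB : 1 ≤ rB := le_max_of_le_left (Nat.one_le_cast.2 hr1)
  obtain ⟨h1, h3, h4⟩ := p2_functional_value_bounds min_le_max hrS hrB hrq
  -- the sum of the normals `(2 rS - qS + 1, qS - 1)` of the edge `P1 P2` and `(0, qS - 1)` of `P2 P3`
  let l : StrongDual ℝ (ℝ × ℝ) := (2 * rS - qS + 1) • ContinuousLinearMap.fst ℝ ℝ ℝ +
    (2 * (qS - 1)) • ContinuousLinearMap.snd ℝ ℝ ℝ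
  have hl : ∀ p : ℝ × ℝ, l p = (2 * rS - qS + 1) * p.1 + 2 * (qS - 1) * p.2 := fun p => by simp [l]
  have hl2 : l P2 = (qS + qB - 3) * (qS - 1 + 2 * rS) + 4 * (qS - 1) * (rB - rS) := by
    rw [hl]; linear_combination (qS - 1 + 2 * rS) * hq
  have hl1 : l P1 = l P2 - 2 * (qS - 1) * (qS - 1 - 2 * rS) := by
    rw [hl, hl]; linear_combination -(qS - 1 + 2 * rS) * hq + 4 * (qS - 1) * hr
  have hl3 : l P3 = l P2 - 2 * (qS - 1 - 2 * rS) := by rw [hl, hl]; ring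
  have hl4 : l P4 = l P2 - 2 * (qS - 1 - 2 * rS) - 2 * (qS - 1) * (4 * rB - 2) := by
    rw [hl, hl]; linear_combination -4 * (qS - 1) * hr
  have hD : 0 < (qS - 1) * (qS - 1 - 2 * rS) := mul_pos (by linarith) (by linarith)
  have hD' : 0 < (qS - 1) * (4 * rB - 2) := mul_pos (by linarith) (by linarith)
  have hl_lt : ∀ y ∈ ({P1, -P1, -P2, P3, -P3, P4, -P4} : Set (ℝ × ℝ)), l y < l P2 := by
    simp only [mem_insert_iff, mem_singleton_iff, forall_eq_or_imp, forall_eq, map_neg]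
    refine ⟨?_, ?_, ?_, ?_, ?_, ?_, ?_⟩ <;> linarith
  rw [insert_comm (-P1) P2, insert_comm P1 P2]
  exact ⟨notMem_convexHull_of_forall_lt hl_lt, exposedPoints_subset_extremePoints
    (mem_exposedPoints_convexHull_insert ⟨P1, mem_insert _ _⟩ hl_lt)⟩

/-- For positive integers `q1, r1, q2, r2` with `q1 + q2 ≥ 3` and `2·rS < qS − 1`,
the point `P2` does NOT lie in the convex hull of the other seven points; in this case the
dual Thurston polytope is a genuine octagon with `P2` among its vertices (i.e. `P2` is an
extreme point of the convex hull `H` of all eight points). -/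
theorem thurston_polytope_P2_vertex (q1 r1 q2 r2 : ℕ)
    (hq1 : 0 < q1) (hr1 : 0 < r1) (hq2 : 0 < q2) (hr2 : 0 < r2)
    (hq : 3 ≤ q1 + q2)
    (hrq : 2 * min (r1 : ℝ) (r2 : ℝ) < min (q1 : ℝ) (q2 : ℝ) - 1) :
    let qB : ℝ := max (q1 : ℝ) (q2 : ℝ)
    let qS : ℝ := min (q1 : ℝ) (q2 : ℝ)
    let rB : ℝ := max (r1 : ℝ) (r2 : ℝ)
    let rS : ℝ := min (r1 : ℝ) (r2 : ℝ)
    let P1 : ℝ × ℝ := (qB - qS - 1, 2 * r1 + 2 * r2 + qB - qS - 1)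
    let P2 : ℝ × ℝ := ((q1 : ℝ) + q2 - 3, 2 * rB - 2 * rS + q1 + q2 - 3)
    let P3 : ℝ × ℝ := ((q1 : ℝ) + q2 - 1, 2 * rB - 2 * rS + q1 + q2 - 3)
    let P4 : ℝ × ℝ := ((q1 : ℝ) + q2 - 1, -(2 * (r1 : ℝ)) - 2 * r2 + q1 + q2 - 1)
    P2 ∉ convexHull ℝ ({P1, -P1, -P2, P3, -P3, P4, -P4} : Set (ℝ × ℝ)) ∧
      P2 ∈ Set.extremePoints ℝ
        (convexHull ℝ ({P1, -P1, P2, -P2, P3, -P3, P4, -P4} : Set (ℝ × ℝ))) :=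
  thurston_polytope_P2_vertex_general q1 r1 q2 r2 hr1 hrq
end

section
/- Let q and r be positive integers with q ≥ 2 and 4r − 1 < 2q − 3. Then the point Q2 = (2q−3, 2q−3) does NOT lie in the convex hull of the other seven points {Q1, −Q1, −Q2, Q3, −Q3, Q4, −Q4}; in this case the dual Thurston polytope B_T*(P_{q,r}) is a genuine octagon with Q2 among its vertices. -/
/-!
A single linear functional `g(x, y) = (2q - 2) y - x` does both jobs: it is strictly smaller at
the seven other points than at `Q2`, so the half-plane `g < g Q2` contains their convex hull, and
`Q2` is the unique maximiser of `g` on the hull of all eight points, hence an extreme point.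
The strict inequality at `Q1` needs `4r - 1 ≤ 2q - 5`, which follows from `4r - 1 < 2q - 3`
because both sides are odd integers.
-/

section Separation

variable {𝕜 E : Type*} [Field 𝕜] [LinearOrder 𝕜] [IsStrictOrderedRing 𝕜] [AddCommGroup E]
  [Module 𝕜 E]

theorem notMem_convexHull_of_forall_lt_s7 {s : Set E} {x : E} (f : E →ₗ[𝕜] 𝕜)
    (h : ∀ y ∈ s, f y < f x) : x ∉ convexHull 𝕜 s := fun hx =>
  lt_irrefl _ (convexHull_min h (convex_halfSpace_lt f.isLinear _) hx)

theorem convex_insert_setOf_lt (f : E →ₗ[𝕜] 𝕜) (x : E) :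
    Convex 𝕜 (insert x {y | f y < f x}) := by
  refine convex_iff_forall_pos.2 fun y hy z hz a b ha hb hab => ?_
  rcases hy with rfl | hy <;> rcases hz with rfl | hz
  · left; rw [← add_smul, hab, one_smul]
  all_goals
    right
    obtain rfl : a = 1 - b := by linarith
    simp only [Set.mem_ofPred_eq, map_add, map_smul, smul_eq_mul] at *
    nlinarith

theorem mem_extremePoints_convexHull_insert {s : Set E} {x : E} (f : E →ₗ[𝕜] 𝕜)
    (h : ∀ y ∈ s, f y < f x) : x ∈ (convexHull 𝕜 (insert x s)).extremePoints 𝕜 := by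
  have hsub : convexHull 𝕜 (insert x s) ⊆ insert x {y | f y < f x} :=
    convexHull_min (Set.insert_subset_insert h) (convex_insert_setOf_lt f x)
  have hdiff : convexHull 𝕜 (insert x s) \ {x} = convexHull 𝕜 (insert x s) ∩ {y | f y < f x} :=
    Set.ext fun y => ⟨fun ⟨hy, hne⟩ => ⟨hy, (hsub hy).resolve_left hne⟩,
      fun ⟨hy, hlt⟩ => ⟨hy, fun (hyx : y = x) => lt_irrefl _ (hyx ▸ hlt)⟩⟩
  rw [(convex_convexHull 𝕜 _).mem_extremePoints_iff_convex_sdiff, hdiff]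
  exact ⟨subset_convexHull 𝕜 _ (Set.mem_insert x s),
    (convex_convexHull 𝕜 _).inter (convex_halfSpace_lt f.isLinear _)⟩

end Separation

namespace PretzelOctagon

def Q1 (r : ℝ) : ℝ × ℝ := (-1, 4 * r - 1)
def Q2 (q : ℝ) : ℝ × ℝ := (2 * q - 3, 2 * q - 3)
def Q3 (q : ℝ) : ℝ × ℝ := (2 * q - 1, 2 * q - 3)
def Q4 (q r : ℝ) : ℝ × ℝ := (2 * q - 1, -(4 * r) + 2 * q - 1)

/-- The level line of `separatingFunctional q` through `Q2 q` also passes through `(-1, 2q - 4)`,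
the lattice point just above `Q1 r` when `4r - 1 ≤ 2q - 5`. -/
def separatingFunctional (q : ℝ) : ℝ × ℝ →ₗ[ℝ] ℝ :=
  (2 * q - 2) • LinearMap.snd ℝ ℝ ℝ - LinearMap.fst ℝ ℝ ℝ

theorem separatingFunctional_apply (q : ℝ) (p : ℝ × ℝ) :
    separatingFunctional q p = (2 * q - 2) * p.2 - p.1 := rfl

theorem separatingFunctional_lt {q r : ℝ} (hr : 1 ≤ r) (hrq : 4 * r - 1 ≤ 2 * q - 5) :
    ∀ p ∈ ({Q1 r, -Q1 r, -Q2 q, Q3 q, -Q3 q, Q4 q r, -Q4 q r} : Set (ℝ × ℝ)),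
      separatingFunctional q p < separatingFunctional q (Q2 q) := by
  simp only [Set.mem_insert_iff, Set.mem_singleton_iff, forall_eq_or_imp, forall_eq, Prod.fst_neg, Prod.snd_neg,
    separatingFunctional_apply, Q1, Q2, Q3, Q4]
  refine ⟨?_, ?_, ?_, ?_, ?_, ?_, ?_⟩ <;> nlinarith

theorem four_mul_sub_one_le_two_mul_sub_five {q r : ℕ} (h : 4 * (r : ℝ) - 1 < 2 * (q : ℝ) - 3) :
    4 * (r : ℝ) - 1 ≤ 2 * q - 5 := by
  have hlt : 4 * r + 2 < 2 * q := by exact_mod_cast (by linarith : (4 * r + 2 : ℝ) < 2 * q)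
  have hle : (4 * r + 4 : ℝ) ≤ 2 * q := by exact_mod_cast (by omega : 4 * r + 4 ≤ 2 * q)
  linarith

end PretzelOctagon

theorem thurston_polytope_Q2_vertex_general (q r : ℕ)
    (hr : 0 < r)
    (hrq : 4 * (r : ℝ) - 1 < 2 * (q : ℝ) - 3) :
    let Q1 : ℝ × ℝ := (-1, 4 * (r : ℝ) - 1)
    let Q2 : ℝ × ℝ := (2 * (q : ℝ) - 3, 2 * (q : ℝ) - 3)
    let Q3 : ℝ × ℝ := (2 * (q : ℝ) - 1, 2 * (q : ℝ) - 3)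
    let Q4 : ℝ × ℝ := (2 * (q : ℝ) - 1, -(4 * (r : ℝ)) + 2 * q - 1)
    Q2 ∉ convexHull ℝ ({Q1, -Q1, -Q2, Q3, -Q3, Q4, -Q4} : Set (ℝ × ℝ)) ∧
      Q2 ∈ Set.extremePoints ℝ
        (convexHull ℝ ({Q1, -Q1, Q2, -Q2, Q3, -Q3, Q4, -Q4} : Set (ℝ × ℝ))) := by
  intro Q1 Q2 Q3 Q4
  have hlt := PretzelOctagon.separatingFunctional_lt (Nat.one_le_cast.2 hr)
    (PretzelOctagon.four_mul_sub_one_le_two_mul_sub_five hrq)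
  refine ⟨notMem_convexHull_of_forall_lt_s7 _ hlt, ?_⟩
  rw [Set.insert_comm (-Q1) Q2, Set.insert_comm Q1 Q2]
  exact mem_extremePoints_convexHull_insert _ hlt

/-- For positive integers `q, r` with `q ≥ 2` and `4r − 1 < 2q − 3`, the point
`Q2 = (2q−3, 2q−3)` does NOT lie in the convex hull of the other seven points; in this case
the dual Thurston polytope is a genuine octagon with `Q2` among its vertices (i.e. `Q2` is an
extreme point of the convex hull `H'` of all eight points). -/
theorem thurston_polytope_Q2_vertex (q r : ℕ)
    (hq : 0 < q) (hr : 0 < r) (hq2 : 2 ≤ q)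
    (hrq : 4 * (r : ℝ) - 1 < 2 * (q : ℝ) - 3) :
    let Q1 : ℝ × ℝ := (-1, 4 * (r : ℝ) - 1)
    let Q2 : ℝ × ℝ := (2 * (q : ℝ) - 3, 2 * (q : ℝ) - 3)
    let Q3 : ℝ × ℝ := (2 * (q : ℝ) - 1, 2 * (q : ℝ) - 3)
    let Q4 : ℝ × ℝ := (2 * (q : ℝ) - 1, -(4 * (r : ℝ)) + 2 * q - 1)
    Q2 ∉ convexHull ℝ ({Q1, -Q1, -Q2, Q3, -Q3, Q4, -Q4} : Set (ℝ × ℝ)) ∧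
      Q2 ∈ Set.extremePoints ℝ
        (convexHull ℝ ({Q1, -Q1, Q2, -Q2, Q3, -Q3, Q4, -Q4} : Set (ℝ × ℝ))) :=
  thurston_polytope_Q2_vertex_general q r hr hrq
end

section
/- Let q1, r1, q2, r2 be positive integers with q1 + q2 ≥ 3, and let H ⊂ ℝ² be the convex hull of the eight points {±P1, ±P2, ±P3, ±P4}. Then the intersection of H with the vertical line {p ∈ ℝ² : p.1 = q1+q2−1} is exactly the closed segment joining P4 = (q1+q2−1, −2r1−2r2+q1+q2−1) to P3 = (q1+q2−1, 2rB−2rS+q1+q2−3); in particular this vertical edge of the dual Thurston polytope has length 4rB − 2. -/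
lemma fst_isLinear : IsLinearMap ℝ (Prod.fst : ℝ × ℝ → ℝ) :=
  ⟨fun _ _ => rfl, fun _ _ => rfl⟩

lemma vertical_slice (M : ℝ) (v3 v4 : ℝ × ℝ) (T : Set (ℝ × ℝ)) (hT : T.Nonempty)
    (h3 : v3.1 = M) (h4 : v4.1 = M) (hTle : ∀ x ∈ T, x.1 ≤ M - 2) :
    convexHull ℝ ({v3, v4} ∪ T) ∩ {p : ℝ × ℝ | p.1 = M} = segment ℝ v4 v3 := by
  have hseg34 : convexHull ℝ ({v3, v4} : Set (ℝ × ℝ)) = segment ℝ v3 v4 := convexHull_pair _ _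
  ext p
  constructor
  · rintro ⟨hpH, hpM⟩
    rw [convexHull_union ⟨v3, by simp⟩ hT, mem_convexJoin] at hpH
    obtain ⟨a, ha, b, hb, u, v, hu, hv, huv, hab⟩ := hpH
    have haM : a.1 = M := by
      have hsub : convexHull ℝ ({v3, v4} : Set (ℝ × ℝ)) ⊆ {x : ℝ × ℝ | x.1 = M} := by
        apply convexHull_min _ (convex_hyperplane fst_isLinear M)
        rintro x (rfl | rfl) <;> assumption
      exact hsub ha
    have hbM : b.1 ≤ M - 2 := by
      have hsub : convexHull ℝ T ⊆ {x : ℝ × ℝ | x.1 ≤ M - 2} :=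
        convexHull_min hTle (convex_halfSpace_le fst_isLinear (M - 2))
      exact hsub hb
    have hpeq : p.1 = u * a.1 + v * b.1 := by
      rw [← hab]; rfl
    have hpM' : p.1 = M := hpM
    have hu' : u = 1 - v := by linarith
    rw [haM, hpM', hu'] at hpeq
    have key : v * (M - b.1) = 0 := by linear_combination hpeq
    have hv0 : v = 0 := by nlinarith [key, mul_nonneg hv (by linarith : (0:ℝ) ≤ M - 2 - b.1)]
    have hu1 : u = 1 := by linarith
    have : p = a := by
      rw [← hab, hv0, hu1]; simp
    rw [this, segment_symm]
    rw [hseg34] at ha; exact ha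
  · intro hp
    obtain ⟨u, v, hu, hv, huv, hab⟩ := hp
    constructor
    · have : segment ℝ v4 v3 ⊆ convexHull ℝ ({v3, v4} ∪ T) := by
        rw [← convexHull_pair]
        exact convexHull_mono (by intro x hx; simp at hx; simp [hx]; tauto)
      exact this ⟨u, v, hu, hv, huv, hab⟩
    · show p.1 = M
      rw [← hab]
      show u * v4.1 + v * v3.1 = M
      rw [h3, h4]
      calc u * M + v * M = (u + v) * M := by ring
        _ = M := by rw [huv, one_mul]

/-- For positive integers `q1, r1, q2, r2` with `q1 + q2 ≥ 3`, the intersection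
of the convex hull `H` of the eight points `±P1, ±P2, ±P3, ±P4` with the vertical line
`{p : p.1 = q1+q2−1}` is exactly the closed segment from `P4` to `P3`; in particular this
vertical edge has length `4rB − 2`. -/
theorem thurston_polytope_vertical_edge (q1 r1 q2 r2 : ℕ)
    (hq1 : 0 < q1) (hr1 : 0 < r1) (hq2 : 0 < q2) (hr2 : 0 < r2)
    (hq : 3 ≤ q1 + q2) :
    let qB : ℝ := max (q1 : ℝ) (q2 : ℝ)
    let qS : ℝ := min (q1 : ℝ) (q2 : ℝ)
    let rB : ℝ := max (r1 : ℝ) (r2 : ℝ)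
    let rS : ℝ := min (r1 : ℝ) (r2 : ℝ)
    let P1 : ℝ × ℝ := (qB - qS - 1, 2 * r1 + 2 * r2 + qB - qS - 1)
    let P2 : ℝ × ℝ := ((q1 : ℝ) + q2 - 3, 2 * rB - 2 * rS + q1 + q2 - 3)
    let P3 : ℝ × ℝ := ((q1 : ℝ) + q2 - 1, 2 * rB - 2 * rS + q1 + q2 - 3)
    let P4 : ℝ × ℝ := ((q1 : ℝ) + q2 - 1, -(2 * (r1 : ℝ)) - 2 * r2 + q1 + q2 - 1)
    let H : Set (ℝ × ℝ) := convexHull ℝ {P1, -P1, P2, -P2, P3, -P3, P4, -P4}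
    H ∩ {p : ℝ × ℝ | p.1 = (q1 : ℝ) + q2 - 1} = segment ℝ P4 P3 ∧
      |P3.2 - P4.2| = 4 * rB - 2 := by
  intro qB qS rB rS P1 P2 P3 P4 H
  have hqsum : qB + qS = (q1 : ℝ) + q2 := max_add_min _ _
  have hrsum : rB + rS = (r1 : ℝ) + r2 := max_add_min _ _
  have hqS1 : (1 : ℝ) ≤ qS := le_min (by exact_mod_cast hq1) (by exact_mod_cast hq2)
  have hrB1 : (1 : ℝ) ≤ rB := le_max_of_le_left (by exact_mod_cast hr1)
  have hq' : (3 : ℝ) ≤ (q1 : ℝ) + q2 := by exact_mod_cast hq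
  have hqB2 : (2 : ℝ) ≤ qB := by
    show (2 : ℝ) ≤ max (q1 : ℝ) (q2 : ℝ)
    rw [← Nat.cast_max]
    have : 2 ≤ max q1 q2 := by omega
    exact_mod_cast this
  constructor
  · show convexHull ℝ {P1, -P1, P2, -P2, P3, -P3, P4, -P4} ∩ _ = _
    have hsetEq : ({P1, -P1, P2, -P2, P3, -P3, P4, -P4} : Set (ℝ × ℝ)) =
        {P3, P4} ∪ {P1, -P1, P2, -P2, -P3, -P4} := by
      ext x
      simp only [Set.mem_insert_iff, Set.mem_singleton_iff, Set.mem_union]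
      tauto
    rw [hsetEq]
    apply vertical_slice
    · exact ⟨P1, by simp⟩
    · rfl
    · rfl
    · intro x hx
      simp only [Set.mem_insert_iff, Set.mem_singleton_iff] at hx
      rcases hx with rfl | rfl | rfl | rfl | rfl | rfl
      · show qB - qS - 1 ≤ (q1 : ℝ) + q2 - 1 - 2
        linarith
      · show -(qB - qS - 1) ≤ (q1 : ℝ) + q2 - 1 - 2
        linarith
      · show (q1 : ℝ) + q2 - 3 ≤ (q1 : ℝ) + q2 - 1 - 2
        linarith
      · show -((q1 : ℝ) + q2 - 3) ≤ (q1 : ℝ) + q2 - 1 - 2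
        linarith
      · show -((q1 : ℝ) + q2 - 1) ≤ (q1 : ℝ) + q2 - 1 - 2
        linarith
      · show -((q1 : ℝ) + q2 - 1) ≤ (q1 : ℝ) + q2 - 1 - 2
        linarith
  · have h2 : P3.2 - P4.2 = 4 * rB - 2 := by
      show (2 * rB - 2 * rS + q1 + q2 - 3) - (-(2 * (r1 : ℝ)) - 2 * r2 + q1 + q2 - 1)
        = 4 * rB - 2
      linarith
    rw [h2, abs_of_nonneg (by linarith)]
end
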